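/- Let n ≥ 2 and let u_1, …, u_{n+1} ∈ ℝ^{n+1} be vectors spanning ℝ^{n+1} with ⟨u_i, u_i⟩ = 1 for all i, and let G be the (n+1)×(n+1) matrix with G_{ij} = ⟨u_i, u_j⟩. Suppose there exist nonzero vectors v_1, …, v_{n+1} ∈ ℝ^{n+1} such that ⟨v_i, u_j⟩ = 0 for all i ≠ j, ⟨v_i, u_i⟩ < 0 for all i, and ⟨v_i, v_j⟩ < 0 for all i ≠ j. Then G has exactly n positive eigenvalues and exactly one negative eigenvalue (counted with multiplicity), and every off-diagonal cofactor satisfies c_{ij} > 0 for i ≠ j. -/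

import Mathlib

/-!
Write `J = diag(-1, 1, …, 1)`, `U` for the matrix with rows `uᵢ` and `W` for the matrix with rows
`wᵢ = vᵢ / ⟨vᵢ, uᵢ⟩`. Then `G = U J Uᵀ`, and the hypotheses on the `vᵢ` say exactly that
`W J Uᵀ = 1`, so `U` is invertible and `G⁻¹ = W J Wᵀ`.
By Sylvester's law of inertia the quadratic form of `G` has the signature of `J`, which gives the
eigenvalue counts. Finally `det G = -(det U)² < 0` and the cofactors are
`c_{ij} = det G · (G⁻¹)_{ji} = det G · ⟨w_j, w_i⟩`, a product of two negative numbers.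
-/

noncomputable section
open Matrix BigOperators

/-- The Lorentzian inner product on `ℝ^{n+1}`:
`⟨x, y⟩ = -x₀y₀ + x₁y₁ + ⋯ + xₙyₙ`. -/
def lform {n : ℕ} (x y : Fin (n + 1) → ℝ) : ℝ :=
  ∑ i, (if i = 0 then (-1 : ℝ) else 1) * x i * y i

/-- The `(i,j)` cofactor of a square matrix: `(-1)^(i+j)` times the determinant
of the matrix obtained by deleting the `i`-th row and the `j`-th column. -/
def cofactor {n : ℕ} (G : Matrix (Fin (n + 1)) (Fin (n + 1)) ℝ) (i j : Fin (n + 1)) : ℝ :=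
  (-1 : ℝ) ^ ((i : ℕ) + (j : ℕ)) * (G.submatrix i.succAbove j.succAbove).det

open Finset

namespace Matrix

variable {R ι : Type*} [CommRing R] [Fintype ι] [DecidableEq ι]

lemma toQuadraticForm'_apply (A : Matrix ι ι R) (x : ι → R) :
    A.toQuadraticForm' x = x ⬝ᵥ A *ᵥ x := by
  simp [toQuadraticForm', toLinearMap₂'_apply']

lemma weightedSumSquares_eq_dotProduct_diagonal_mulVec (d x : ι → R) :
    QuadraticMap.weightedSumSquares R d x = x ⬝ᵥ diagonal d *ᵥ x := by
  simp only [QuadraticMap.weightedSumSquares_apply, smul_eq_mul, dotProduct, mulVec_diagonal]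
  exact sum_congr rfl fun i _ => by ring

lemma equivalent_weightedSumSquares_of_isUnit (P : Matrix ι ι R) (hP : IsUnit P) (d : ι → R) :
    (P * diagonal d * Pᵀ).toQuadraticForm'.Equivalent
      (QuadraticMap.weightedSumSquares R d) := by
  obtain ⟨h⟩ := ((isUnit_transpose P).2 hP).nonempty_invertible
  refine ⟨⟨Pᵀ.toLinearEquiv' h, fun x => ?_⟩⟩
  change QuadraticMap.weightedSumSquares R d (Pᵀ *ᵥ x) = _
  rw [weightedSumSquares_eq_dotProduct_diagonal_mulVec, toQuadraticForm'_apply, ← mulVec_mulVec,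
    ← mulVec_mulVec, dotProduct_mulVec x P, ← mulVec_transpose]

lemma mul_mul_transpose_mul_eq_one_of_mul_mul_transpose_eq_one {J A B : Matrix ι ι R} (hJ : Jᵀ = J)
    (h : A * J * Bᵀ = 1) : B * J * Bᵀ * (A * J * Aᵀ) = 1 := by
  have h' : J * Bᵀ * A = 1 := mul_eq_one_comm.mp (by rwa [← mul_assoc])
  calc B * J * Bᵀ * (A * J * Aᵀ) = B * (J * Bᵀ * A) * J * Aᵀ := by simp only [mul_assoc]
    _ = (A * J * Bᵀ)ᵀ := by
      rw [h', mul_one, transpose_mul, transpose_mul, hJ, transpose_transpose, mul_assoc]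
    _ = 1 := by rw [h, transpose_one]

lemma adjugate_eq_det_smul_of_mul_eq_one {A B : Matrix ι ι R} (h : A * B = 1) :
    A.adjugate = A.det • B := by
  rw [← mul_one A.adjugate, ← h, ← mul_assoc, adjugate_mul, smul_mul_assoc, one_mul]

namespace IsHermitian

lemma toQuadraticForm'_equivalent_weightedSumSquares {A : Matrix ι ι ℝ} (hA : A.IsHermitian) :
    A.toQuadraticForm'.Equivalent (QuadraticMap.weightedSumSquares ℝ hA.eigenvalues) := by
  set P : Matrix ι ι ℝ := (hA.eigenvectorUnitary : Matrix ι ι ℝ)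
  have hAP : A = P * diagonal hA.eigenvalues * Pᵀ := by
    have h := hA.spectral_theorem
    rwa [Unitary.conjStarAlgAut_apply, RCLike.ofReal_real_eq_id, Function.id_comp,
      star_eq_conjTranspose, conjTranspose_eq_transpose_of_trivial] at h
  have hP := equivalent_weightedSumSquares_of_isUnit P Unitary.isUnit_coe hA.eigenvalues
  rwa [← hAP] at hP

variable {A : Matrix ι ι ℝ} (hA : A.IsHermitian) {d : ι → ℝ}
  (h : A.toQuadraticForm'.Equivalent (QuadraticMap.weightedSumSquares ℝ d))
include hA h

lemma card_pos_eigenvalues_eq : #{i | 0 < hA.eigenvalues i} = #{i | 0 < d i} := by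
  have h₁ := QuadraticForm.sigPos_of_equiv_weightedSumSquares h
  have h₂ := QuadraticForm.sigPos_of_equiv_weightedSumSquares
    hA.toQuadraticForm'_equivalent_weightedSumSquares
  simpa [Set.ncard_eq_toFinset_card'] using h₂.symm.trans h₁

lemma card_neg_eigenvalues_eq : #{i | hA.eigenvalues i < 0} = #{i | d i < 0} := by
  have h₁ := QuadraticForm.sigNeg_of_equiv_weightedSumSquares h
  have h₂ := QuadraticForm.sigNeg_of_equiv_weightedSumSquares
    hA.toQuadraticForm'_equivalent_weightedSumSquares
  simpa [Set.ncard_eq_toFinset_card'] using h₂.symm.trans h₁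

end IsHermitian

end Matrix

lemma cofactor_eq_adjugate_apply {n : ℕ} (G : Matrix (Fin (n + 1)) (Fin (n + 1)) ℝ)
    (i j : Fin (n + 1)) : cofactor G i j = G.adjugate j i := by
  rw [adjugate_fin_succ_eq_det_submatrix]
  rfl

section Lorentz

variable {n : ℕ}

def lorentzSign (n : ℕ) : Fin (n + 1) → ℝ := fun i => if i = 0 then -1 else 1

lemma card_lorentzSign_pos : #{i | 0 < lorentzSign n i} = n := by
  have : ({i | 0 < lorentzSign n i} : Finset (Fin (n + 1))) = univ.erase 0 := by
    ext i; rw [mem_filter]; by_cases hi : i = 0 <;> simp [lorentzSign, hi]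
  rw [this, card_erase_of_mem (mem_univ _), card_univ, Fintype.card_fin, Nat.add_sub_cancel]

lemma card_lorentzSign_neg : #{i | lorentzSign n i < 0} = 1 := by
  refine card_eq_one.mpr ⟨0, ?_⟩
  ext i; rw [mem_filter]; by_cases hi : i = 0 <;> simp [lorentzSign, hi]

lemma det_diagonal_lorentzSign : (diagonal (lorentzSign n)).det = -1 := by
  simp [det_diagonal, lorentzSign, prod_ite_eq']

lemma lform_eq_dotProduct (x y : Fin (n + 1) → ℝ) :
    lform x y = x ⬝ᵥ diagonal (lorentzSign n) *ᵥ y := by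
  simp only [lform, lorentzSign, dotProduct, mulVec_diagonal]
  exact sum_congr rfl fun i _ => by ring

lemma lform_comm (x y : Fin (n + 1) → ℝ) : lform x y = lform y x := by
  simp only [lform]
  exact sum_congr rfl fun i _ => by ring

lemma lform_smul_left (a : ℝ) (x y : Fin (n + 1) → ℝ) : lform (a • x) y = a * lform x y := by
  rw [lform_eq_dotProduct, lform_eq_dotProduct, smul_dotProduct, smul_eq_mul]

lemma lform_smul_right (a : ℝ) (x y : Fin (n + 1) → ℝ) : lform x (a • y) = a * lform x y := by
  rw [lform_comm, lform_smul_left, lform_comm]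

lemma mul_diagonal_lorentzSign_mul_transpose_apply (A B : Matrix (Fin (n + 1)) (Fin (n + 1)) ℝ)
    (i j : Fin (n + 1)) : (A * diagonal (lorentzSign n) * Bᵀ) i j = lform (A i) (B j) := by
  rw [lform_eq_dotProduct, mul_apply, dotProduct]
  simp only [mul_diagonal, transpose_apply, mulVec_diagonal]
  exact sum_congr rfl fun k _ => by ring

lemma det_mul_diagonal_lorentzSign_mul_transpose (U : Matrix (Fin (n + 1)) (Fin (n + 1)) ℝ) :
    (U * diagonal (lorentzSign n) * Uᵀ).det = -U.det ^ 2 := by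
  rw [det_mul, det_mul, det_transpose, det_diagonal_lorentzSign]
  ring

def dualFamily (u v : Fin (n + 1) → Fin (n + 1) → ℝ) (i : Fin (n + 1)) : Fin (n + 1) → ℝ :=
  (lform (v i) (u i))⁻¹ • v i

variable {u v : Fin (n + 1) → Fin (n + 1) → ℝ}

lemma lform_dualFamily_left (hvu : ∀ i j, i ≠ j → lform (v i) (u j) = 0)
    (hvui : ∀ i, lform (v i) (u i) ≠ 0) (i j : Fin (n + 1)) :
    lform (dualFamily u v i) (u j) = if i = j then 1 else 0 := by
  rw [dualFamily, lform_smul_left]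
  split_ifs with hij
  · subst hij
    exact inv_mul_cancel₀ (hvui i)
  · rw [hvu i j hij, mul_zero]

lemma lform_dualFamily_neg (hvui : ∀ i, lform (v i) (u i) < 0)
    (hvv : ∀ i j, i ≠ j → lform (v i) (v j) < 0) {i j : Fin (n + 1)} (hij : i ≠ j) :
    lform (dualFamily u v i) (dualFamily u v j) < 0 := by
  rw [dualFamily, dualFamily, lform_smul_left, lform_smul_right]
  exact mul_neg_of_neg_of_pos (inv_lt_zero.mpr (hvui i))
    (mul_pos_of_neg_of_neg (inv_lt_zero.mpr (hvui j)) (hvv i j hij))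

end Lorentz

theorem stmt1_general (n : ℕ)
    (u : Fin (n + 1) → (Fin (n + 1) → ℝ))
    (G : Matrix (Fin (n + 1)) (Fin (n + 1)) ℝ)
    (hGdef : ∀ i j, G i j = lform (u i) (u j))
    (v : Fin (n + 1) → (Fin (n + 1) → ℝ))
    (hvu : ∀ i j, i ≠ j → lform (v i) (u j) = 0)
    (hvui : ∀ i, lform (v i) (u i) < 0)
    (hvv : ∀ i j, i ≠ j → lform (v i) (v j) < 0) :
    ∃ hG : G.IsHermitian,
      (Finset.univ.filter fun i => 0 < hG.eigenvalues i).card = n ∧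
      (Finset.univ.filter fun i => hG.eigenvalues i < 0).card = 1 ∧
      ∀ i j, i ≠ j → 0 < cofactor G i j := by
  set J := diagonal (lorentzSign n)
  set U := of u
  set W := of (dualFamily u v)
  have hGU : G = U * J * Uᵀ := by
    ext i j
    rw [hGdef, mul_diagonal_lorentzSign_mul_transpose_apply]
    rfl
  have hWU : W * J * Uᵀ = 1 := by
    ext i j
    rw [mul_diagonal_lorentzSign_mul_transpose_apply, one_apply]
    exact lform_dualFamily_left hvu (fun i => (hvui i).ne) i j
  have hdetU : U.det ≠ 0 := fun h => by
    simpa [h] using congrArg det hWU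
  have hdetG : G.det < 0 := by
    rw [hGU, det_mul_diagonal_lorentzSign_mul_transpose]
    exact neg_neg_of_pos (sq_pos_of_ne_zero hdetU)
  have hG : G.IsHermitian := by
    ext i j
    simp only [conjTranspose_apply, star_trivial, hGdef, lform_comm]
  have hQ : G.toQuadraticForm'.Equivalent (QuadraticMap.weightedSumSquares ℝ (lorentzSign n)) :=
    hGU ▸ equivalent_weightedSumSquares_of_isUnit U ((isUnit_iff_isUnit_det U).2 hdetU.isUnit) _
  refine ⟨hG, ?_, ?_, fun i j hij => ?_⟩
  · rw [hG.card_pos_eigenvalues_eq hQ, card_lorentzSign_pos]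
  · rw [hG.card_neg_eigenvalues_eq hQ, card_lorentzSign_neg]
  · have hGinv : G * (W * J * Wᵀ) = 1 :=
      hGU ▸ mul_mul_transpose_mul_eq_one_of_mul_mul_transpose_eq_one (diagonal_transpose _) hWU
    rw [cofactor_eq_adjugate_apply, adjugate_eq_det_smul_of_mul_eq_one hGinv, Matrix.smul_apply,
      smul_eq_mul, mul_diagonal_lorentzSign_mul_transpose_apply]
    exact mul_pos_of_neg_of_neg hdetG (lform_dualFamily_neg hvui hvv hij.symm)

theorem stmt1 (n : ℕ) (hn : 2 ≤ n)
    (u : Fin (n + 1) → (Fin (n + 1) → ℝ))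
    (hspan : Submodule.span ℝ (Set.range u) = ⊤)
    (hunit : ∀ i, lform (u i) (u i) = 1)
    (G : Matrix (Fin (n + 1)) (Fin (n + 1)) ℝ)
    (hGdef : ∀ i j, G i j = lform (u i) (u j))
    (v : Fin (n + 1) → (Fin (n + 1) → ℝ))
    (hv0 : ∀ i, v i ≠ 0)
    (hvu : ∀ i j, i ≠ j → lform (v i) (u j) = 0)
    (hvui : ∀ i, lform (v i) (u i) < 0)
    (hvv : ∀ i j, i ≠ j → lform (v i) (v j) < 0) :
    ∃ hG : G.IsHermitian,
      (Finset.univ.filter fun i => 0 < hG.eigenvalues i).card = n ∧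
      (Finset.univ.filter fun i => hG.eigenvalues i < 0).card = 1 ∧
      ∀ i j, i ≠ j → 0 < cofactor G i j :=
  stmt1_general n u G hGdef v hvu hvui hvv
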